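/- Let X be a real random variable with probability density f(x) = K₀(|x|)/π, and define n(α, ν) := E[tanh(αX + ν)]. Then for ν ≥ 0, n(α, ν) is nonincreasing in α ≥ 0 for each fixed ν, nondecreasing in ν ≥ 0 for each fixed α, and satisfies 0 ≤ n(α, ν) ≤ n(0, ν) = tanh(ν) ≤ 1 for all α, ν ≥ 0. -/

import Mathlib

open Real MeasureTheory

/-- Modified Bessel function of the second kind of order 0, via its integral
representation `K₀(x) = ∫₀^∞ exp(-x cosh t) dt`. -/
noncomputable def besselK0 (x : ℝ) : ℝ :=
  ∫ t in Set.Ioi (0 : ℝ), Real.exp (-x * Real.cosh t)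

/-- The probability density `x ↦ K₀(|x|)/π` on ℝ. -/
noncomputable def besselDensity (x : ℝ) : ℝ := besselK0 |x| / Real.pi

/-- The population EM expectation `n(α, ν) = E[tanh(αX + ν)]`. -/
noncomputable def nExp (α ν : ℝ) : ℝ :=
  ∫ x : ℝ, Real.tanh (α * x + ν) * besselDensity x

/-!
The density is even, so `n(α, ν)` is also the integral of the even part
`(tanh (ν + αx) + tanh (ν - αx)) / 2 = sinh 2ν / (cosh 2ν + cosh 2αx)` against it. This kernel is
nondecreasing in `ν` (as `tanh` is), nonnegative for `ν ≥ 0`, and for `ν ≥ 0` nonincreasing in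
`|αx|`; integrating gives the monotonicity statements. The normalisation `∫ K₀(|x|) dx = π`, which
yields `n(0, ν) = tanh ν`, comes from Tonelli: `∫₀^∞ K₀ = ∫₀^∞ dt / cosh t = π / 2`.
-/

open Set Filter

namespace Real

theorem tanh_monotone : Monotone tanh := fun x y hxy => by
  rw [tanh_eq_sinh_div_cosh, tanh_eq_sinh_div_cosh, div_le_div_iff₀ (cosh_pos x) (cosh_pos y)]
  have : sinh (x - y) ≤ 0 := sinh_nonpos_iff.2 (by linarith)
  linarith [sinh_sub x y]

@[fun_prop]
theorem measurable_tanh : Measurable tanh := tanh_monotone.measurable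

theorem tanh_add_add_tanh_sub (ν a : ℝ) :
    tanh (ν + a) + tanh (ν - a) = 2 * sinh (2 * ν) / (cosh (2 * ν) + cosh (2 * a)) := by
  have e1 : sinh (ν + a) * cosh (ν - a) + cosh (ν + a) * sinh (ν - a) = sinh (2 * ν) := by
    rw [← sinh_add]; ring_nf
  have e2 : cosh (ν + a) * cosh (ν - a) = (cosh (2 * ν) + cosh (2 * a)) / 2 := by
    rw [two_mul, two_mul]
    simp only [cosh_add, cosh_sub]
    linear_combination (sinh ν ^ 2 + 1 / 2) * cosh_sq a + (cosh a ^ 2 - 1 / 2) * cosh_sq ν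
  rw [tanh_eq_sinh_div_cosh, tanh_eq_sinh_div_cosh,
    div_add_div _ _ (cosh_pos _).ne' (cosh_pos _).ne', e1, e2]
  field_simp

end Real

noncomputable def tanhEven (ν a : ℝ) : ℝ := (tanh (ν + a) + tanh (ν - a)) / 2

theorem tanhEven_monotone (a : ℝ) : Monotone fun ν => tanhEven ν a := fun ν ν' h => by
  simp only [tanhEven]
  gcongr ?_ / 2
  exact add_le_add (Real.tanh_monotone (by linarith)) (Real.tanh_monotone (by linarith))

theorem tanhEven_nonneg {ν : ℝ} (hν : 0 ≤ ν) (a : ℝ) : 0 ≤ tanhEven ν a := by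
  have : tanh (a - ν) ≤ tanh (ν + a) := Real.tanh_monotone (by linarith)
  rw [← neg_sub, Real.tanh_neg] at this
  unfold tanhEven
  linarith

theorem abs_tanhEven_le_one (ν a : ℝ) : |tanhEven ν a| ≤ 1 := by
  unfold tanhEven
  have h₁ := abs_tanh_lt_one (ν + a)
  have h₂ := abs_tanh_lt_one (ν - a)
  rw [abs_div, abs_two, div_le_one two_pos]
  linarith [abs_add_le (tanh (ν + a)) (tanh (ν - a))]

theorem tanhEven_le_of_abs_le {ν a b : ℝ} (hν : 0 ≤ ν) (hab : |a| ≤ |b|) :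
    tanhEven ν b ≤ tanhEven ν a := by
  simp only [tanhEven, Real.tanh_add_add_tanh_sub]
  have : cosh (2 * a) ≤ cosh (2 * b) := by
    rw [Real.cosh_le_cosh, abs_mul, abs_mul]; gcongr
  gcongr

theorem measurable_tanhEven (ν : ℝ) : Measurable (tanhEven ν) := by
  unfold tanhEven; fun_prop

theorem integrable_mul_of_abs_le_one {Ω : Type*} [MeasurableSpace Ω] {μ : Measure Ω}
    {g ρ : Ω → ℝ} (hρ : Integrable ρ μ) (hg : Measurable g) (hg_le : ∀ x, |g x| ≤ 1) :
    Integrable (fun x => g x * ρ x) μ :=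
  hρ.bdd_mul hg.aestronglyMeasurable (ae_of_all _ hg_le)

theorem integral_tanh_mul_eq_integral_tanhEven_mul {ρ : ℝ → ℝ} (hρ_even : ∀ x, ρ (-x) = ρ x)
    (hρ : Integrable ρ) (α ν : ℝ) :
    ∫ x, tanh (α * x + ν) * ρ x = ∫ x, tanhEven ν (α * x) * ρ x := by
  have h_int : ∀ c : ℝ, Integrable fun x => tanh (c * x + ν) * ρ x := fun c =>
    integrable_mul_of_abs_le_one hρ (by fun_prop) fun x => (abs_tanh_lt_one _).le
  have h_refl : ∫ x, tanh (-α * x + ν) * ρ x = ∫ x, tanh (α * x + ν) * ρ x := by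
    rw [← integral_neg_eq_self]
    simp only [hρ_even, neg_mul_neg]
  have h_pt : ∀ x, tanhEven ν (α * x) * ρ x =
      (tanh (α * x + ν) * ρ x + tanh (-α * x + ν) * ρ x) / 2 := fun x => by
    unfold tanhEven; ring_nf
  simp_rw [h_pt]
  rw [integral_div, integral_add (h_int α) (h_int (-α)), h_refl]
  ring

theorem integrable_comp_abs {E : Type*} [NormedAddCommGroup E] {f : ℝ → E}
    (hf : IntegrableOn f (Ioi 0)) : Integrable fun x => f |x| := by
  have h_pos : IntegrableOn (fun x => f |x|) (Ioi 0) :=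
    hf.congr_fun (fun x hx => by rw [abs_of_pos hx]) measurableSet_Ioi
  have h_neg : IntegrableOn (fun x => f |x|) (Iic 0) := by
    have h_emb : MeasurableEmbedding fun x : ℝ => -x := (Homeomorph.neg ℝ).measurableEmbedding
    rw [← Measure.map_neg_eq_self (volume : Measure ℝ), h_emb.integrableOn_map_iff]
    simp_rw [Function.comp_def, abs_neg, neg_preimage, neg_Iic, neg_zero]
    exact (integrableOn_Ici_iff_integrableOn_Ioi).2 h_pos
  rw [← integrableOn_univ, ← Iic_union_Ioi (a := (0 : ℝ))]
  exact h_neg.union h_pos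

theorem lintegral_inv_cosh_Ioi :
    ∫⁻ t in Ioi (0 : ℝ), ENNReal.ofReal (cosh t)⁻¹ = ENNReal.ofReal (π / 2) := by
  have h_deriv : ∀ t ∈ Ici (0 : ℝ), HasDerivAt (fun t => 2 * arctan (exp t)) (cosh t)⁻¹ t := by
    intro t _
    refine (((hasDerivAt_arctan _).comp t (hasDerivAt_exp t)).const_mul 2).congr_deriv ?_
    rw [cosh_eq, exp_neg]
    field_simp
    ring
  have h_lim : Tendsto (fun t => 2 * arctan (exp t)) atTop (nhds π) := by
    have := ((tendsto_arctan_atTop.mono_right nhdsWithin_le_nhds).comp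
      tendsto_exp_atTop).const_mul (2 : ℝ)
    rwa [mul_div_cancel₀ _ two_ne_zero] at this
  have h_nonneg : ∀ t ∈ Ioi (0 : ℝ), 0 ≤ (cosh t)⁻¹ := fun t _ => by positivity
  rw [← ofReal_integral_eq_lintegral_ofReal
      (integrableOn_Ioi_deriv_of_nonneg' h_deriv h_nonneg h_lim)
      ((ae_restrict_iff' measurableSet_Ioi).2 (ae_of_all _ h_nonneg)),
    integral_Ioi_of_hasDerivAt_of_nonneg' h_deriv h_nonneg h_lim]
  simp [arctan_one]
  ring_nf

theorem lintegral_exp_neg_mul_Ioi {c : ℝ} (hc : 0 < c) :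
    ∫⁻ x in Ioi (0 : ℝ), ENNReal.ofReal (exp (-x * c)) = ENNReal.ofReal c⁻¹ := by
  have h : ∀ x : ℝ, -x * c = -c * x := fun x => by ring
  simp_rw [h]
  rw [← ofReal_integral_eq_lintegral_ofReal (integrableOn_exp_mul_Ioi (neg_lt_zero.2 hc) 0)
      (ae_of_all _ fun _ => (exp_pos _).le), integral_exp_mul_Ioi (neg_lt_zero.2 hc)]
  simp

theorem integrableOn_exp_neg_mul_cosh {c : ℝ} (hc : 0 < c) :
    IntegrableOn (fun t => exp (-c * cosh t)) (Ioi 0) := by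
  refine (integrableOn_exp_mul_Ioi (neg_lt_zero.2 hc) 0).mono' (by fun_prop) ?_
  refine (ae_restrict_iff' measurableSet_Ioi).2 (ae_of_all _ fun t ht => ?_)
  rw [norm_of_nonneg (exp_pos _).le, exp_le_exp, neg_mul, neg_mul, neg_le_neg_iff]
  gcongr
  exact ((self_lt_sinh_iff.2 ht).trans (sinh_lt_cosh t)).le

theorem ofReal_besselK0 {x : ℝ} (hx : 0 < x) :
    ENNReal.ofReal (besselK0 x) = ∫⁻ t in Ioi 0, ENNReal.ofReal (exp (-x * cosh t)) :=
  ofReal_integral_eq_lintegral_ofReal (integrableOn_exp_neg_mul_cosh hx)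
    (ae_of_all _ fun _ => (exp_pos _).le)

theorem besselK0_nonneg (x : ℝ) : 0 ≤ besselK0 x :=
  setIntegral_nonneg measurableSet_Ioi fun _ _ => (exp_pos _).le

theorem measurable_besselK0 : Measurable besselK0 :=
  (Continuous.stronglyMeasurable (by fun_prop : Continuous fun p : ℝ × ℝ =>
    exp (-p.1 * cosh p.2))).integral_prod_right'.measurable

theorem lintegral_besselK0_Ioi :
    ∫⁻ x in Ioi (0 : ℝ), ENNReal.ofReal (besselK0 x) = ENNReal.ofReal (π / 2) := by
  rw [setLIntegral_congr_fun measurableSet_Ioi fun x hx => ofReal_besselK0 hx,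
    lintegral_lintegral_swap (Measurable.aemeasurable (by fun_prop)),
    setLIntegral_congr_fun measurableSet_Ioi fun t _ => lintegral_exp_neg_mul_Ioi (cosh_pos t),
    lintegral_inv_cosh_Ioi]

theorem integral_besselK0_Ioi : ∫ x in Ioi (0 : ℝ), besselK0 x = π / 2 := by
  rw [integral_eq_lintegral_of_nonneg_ae (ae_of_all _ besselK0_nonneg)
    measurable_besselK0.aestronglyMeasurable, lintegral_besselK0_Ioi,
    ENNReal.toReal_ofReal (by positivity)]

theorem integrableOn_besselK0_Ioi : IntegrableOn besselK0 (Ioi 0) := by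
  refine ⟨measurable_besselK0.aestronglyMeasurable, ?_⟩
  rw [hasFiniteIntegral_iff_ofReal (ae_of_all _ besselK0_nonneg), lintegral_besselK0_Ioi]
  exact ENNReal.ofReal_lt_top

theorem besselDensity_nonneg (x : ℝ) : 0 ≤ besselDensity x :=
  div_nonneg (besselK0_nonneg _) pi_pos.le

theorem besselDensity_neg (x : ℝ) : besselDensity (-x) = besselDensity x := by
  rw [besselDensity, besselDensity, abs_neg]

theorem integrable_besselDensity : Integrable besselDensity :=
  (integrable_comp_abs integrableOn_besselK0_Ioi).div_const π

theorem integral_besselDensity : ∫ x, besselDensity x = 1 := by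
  simp only [besselDensity]
  rw [integral_div, integral_comp_abs (f := besselK0), integral_besselK0_Ioi]
  field_simp

theorem nExp_eq_integral_tanhEven (α ν : ℝ) :
    nExp α ν = ∫ x, tanhEven ν (α * x) * besselDensity x :=
  integral_tanh_mul_eq_integral_tanhEven_mul besselDensity_neg integrable_besselDensity α ν

theorem integrable_tanhEven_mul_besselDensity (α ν : ℝ) :
    Integrable fun x => tanhEven ν (α * x) * besselDensity x :=
  integrable_mul_of_abs_le_one integrable_besselDensity
    ((measurable_tanhEven ν).comp (measurable_const_mul α)) fun _ => abs_tanhEven_le_one _ _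

theorem nExp_zero_left (ν : ℝ) : nExp 0 ν = tanh ν := by
  simp only [nExp, zero_mul, zero_add]
  rw [integral_const_mul, integral_besselDensity, mul_one]

theorem nExp_monotone :
    (∀ ν : ℝ, 0 ≤ ν → ∀ α α' : ℝ, 0 ≤ α → α ≤ α' → nExp α' ν ≤ nExp α ν) ∧
      (∀ α : ℝ, 0 ≤ α → ∀ ν ν' : ℝ, 0 ≤ ν → ν ≤ ν' → nExp α ν ≤ nExp α ν') ∧
      (∀ α ν : ℝ, 0 ≤ α → 0 ≤ ν →
        0 ≤ nExp α ν ∧ nExp α ν ≤ nExp 0 ν ∧ nExp 0 ν = Real.tanh ν ∧ Real.tanh ν ≤ 1) := by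
  have h_int := integrable_tanhEven_mul_besselDensity
  have h_anti : ∀ ν : ℝ, 0 ≤ ν → ∀ α α' : ℝ, 0 ≤ α → α ≤ α' → nExp α' ν ≤ nExp α ν := by
    intro ν hν α α' hα hαα'
    rw [nExp_eq_integral_tanhEven, nExp_eq_integral_tanhEven]
    refine integral_mono (h_int α' ν) (h_int α ν) fun x =>
      mul_le_mul_of_nonneg_right (tanhEven_le_of_abs_le hν ?_) (besselDensity_nonneg x)
    rw [abs_mul, abs_mul, abs_of_nonneg hα, abs_of_nonneg (hα.trans hαα')]
    gcongr
  refine ⟨h_anti, fun α _ ν ν' _ hνν' => ?_, fun α ν hα hν =>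
    ⟨?_, h_anti ν hν 0 α le_rfl hα, nExp_zero_left ν, (tanh_lt_one ν).le⟩⟩
  · rw [nExp_eq_integral_tanhEven, nExp_eq_integral_tanhEven]
    exact integral_mono (h_int α ν) (h_int α ν') fun x =>
      mul_le_mul_of_nonneg_right (tanhEven_monotone _ hνν') (besselDensity_nonneg x)
  · rw [nExp_eq_integral_tanhEven]
    exact integral_nonneg fun x => mul_nonneg (tanhEven_nonneg hν _) (besselDensity_nonneg x)
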